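/- arXiv:2202.09660 — 6 statements merged into one kernel-verified Lean document; each statement's English description precedes it below -/
import Mathlib

section
/- Let N be a positive integer, let p ∈ ℂ[z] be a polynomial of degree N, fix τ₀ ∈ ℂ, and for τ ∈ ℂ let q_τ = exp(((τ−τ₀)/(2N)) ∂²/∂z²) p. Suppose that for some σ ∈ ℂ the N roots of q_σ are distinct. Then there exist an open neighborhood V of σ in ℂ and holomorphic functions z_1, …, z_N : V → ℂ such that for every τ ∈ V one has q_τ(z) = (leading coefficient of p) · ∏_{j=1}^{N} (z − z_j(τ)), the values z_1(τ), …, z_N(τ) are pairwise distinct, and for every j and every τ ∈ V, z_j'(τ) = −(1/N) ∑_{k ≠ j} 1/(z_j(τ) − z_k(τ)). -/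
/-!
The function `F(τ, y) = q_τ(y)` is polynomial in both variables and solves the heat equation
`∂_τ F = (1/(2N)) ∂_y² F`. At a simple root of `q_σ` we have `∂_y F ≠ 0`, so the implicit function
theorem gives a holomorphic branch `z_j` of roots through each of the `N` roots of `q_σ`, with
`z_j' = -∂_τ F / ∂_y F`. Near `σ` the branches stay distinct, so they are all the roots of the
degree-`N` polynomial `q_τ`; and for `q = c ∏ (X - z_k)` one has
`q''(z_j) = 2 q'(z_j) ∑_{k ≠ j} 1/(z_j - z_k)`, which turns `-(1/(2N)) q''(z_j) / q'(z_j)` into the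
stated velocity.
-/

open Polynomial Finset

/-- The heat operator `exp((σ/(2N)) ∂²/∂z²)` applied to a polynomial, as a
terminating power series. -/
noncomputable def heatOp (N : ℕ) (σ : ℂ) (p : Polynomial ℂ) : Polynomial ℂ :=
  ∑ m ∈ Finset.range (p.natDegree + 1),
    ((σ / (2 * N)) ^ m / (Nat.factorial m : ℂ)) • Polynomial.derivative^[2 * m] p

open Filter Topology

section ImplicitFunction

variable {𝕜 : Type*} [NontriviallyNormedField 𝕜] [CompleteSpace 𝕜] {F : 𝕜 × 𝕜 → 𝕜}

theorem HasStrictFDerivAt.exists_implicit_hasDerivAt {a b : 𝕜} {u : 𝕜 × 𝕜}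
    (hF : HasStrictFDerivAt F (a • ContinuousLinearMap.fst 𝕜 𝕜 𝕜 +
      b • ContinuousLinearMap.snd 𝕜 𝕜 𝕜) u) (hb : b ≠ 0) :
    ∃ ψ : 𝕜 → 𝕜, HasDerivAt ψ (-(a / b)) u.1 ∧ ∀ᶠ w in 𝓝 u, F w = F u ↔ ψ w.1 = w.2 := by
  set e := ContinuousLinearEquiv.unitsEquivAut 𝕜 (Units.mk0 b hb)
  have hinr : (a • ContinuousLinearMap.fst 𝕜 𝕜 𝕜 + b • ContinuousLinearMap.snd 𝕜 𝕜 𝕜) ∘L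
      ContinuousLinearMap.inr 𝕜 𝕜 𝕜 = e := by
    ext; simp [e]
  have hinv : ((a • ContinuousLinearMap.fst 𝕜 𝕜 𝕜 + b • ContinuousLinearMap.snd 𝕜 𝕜 𝕜) ∘L
      ContinuousLinearMap.inr 𝕜 𝕜 𝕜).IsInvertible := hinr ▸ ⟨e, rfl⟩
  refine ⟨hF.implicitFunctionOfProdDomain hinv, ?_,
    hF.eventually_apply_eq_iff_implicitFunctionOfProdDomain hinv⟩
  refine (hF.hasStrictFDerivAt_implicitFunctionOfProdDomain hinv).hasStrictDerivAt.hasDerivAt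
    |>.congr_deriv ?_
  rw [hinr, ContinuousLinearMap.inverse_equiv]
  simp [e, div_eq_mul_inv]

theorem exists_eventually_implicit_hasDerivAt {A B : 𝕜 × 𝕜 → 𝕜}
    (hF : ∀ v, HasStrictFDerivAt F (A v • ContinuousLinearMap.fst 𝕜 𝕜 𝕜 +
      B v • ContinuousLinearMap.snd 𝕜 𝕜 𝕜) v)
    {u : 𝕜 × 𝕜} (hu : F u = 0) (hB : B u ≠ 0) :
    ∃ g : 𝕜 → 𝕜, g u.1 = u.2 ∧ ∀ᶠ s in 𝓝 u.1, F (s, g s) = 0 ∧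
      (B (s, g s) ≠ 0 → HasDerivAt g (-(A (s, g s) / B (s, g s))) s) := by
  obtain ⟨g, hg, hgiff⟩ := (hF u).exists_implicit_hasDerivAt hB
  rw [hu] at hgiff
  have hgu : g u.1 = u.2 := hgiff.self_of_nhds.1 hu
  have hgraph : Tendsto (fun s => (s, g s)) (𝓝 u.1) (𝓝 u) := by
    simpa [hgu] using (continuousAt_id.prodMk hg.continuousAt).tendsto
  refine ⟨g, hgu, (hgraph.eventually hgiff.eventually_nhds).mono fun s hs => ?_⟩
  have hzero : F (s, g s) = 0 := hs.self_of_nhds.2 rfl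
  refine ⟨hzero, fun hBs => ?_⟩
  -- Mathlib differentiates an implicit function only at its base point: re-centre at `(s, g s)`
  -- and use local uniqueness of the implicit function.
  obtain ⟨ψ, hψ, hψiff⟩ := (hF (s, g s)).exists_implicit_hasDerivAt hBs
  have hψs : ψ s = g s := hψiff.self_of_nhds.1 rfl
  have hψgraph : Tendsto (fun x => (x, ψ x)) (𝓝 s) (𝓝 (s, g s)) := by
    simpa [hψs] using (continuousAt_id.prodMk hψ.continuousAt).tendsto
  refine hψ.congr_of_eventuallyEq ?_
  filter_upwards [hψgraph.eventually hψiff, hψgraph.eventually hs] with x hψx hgx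
  exact hgx.1 ((hψx.2 rfl).trans hzero)

end ImplicitFunction

theorem eventually_injective_of_continuousAt {X Y ι : Type*} [TopologicalSpace X]
    [TopologicalSpace Y] [T2Space Y] [Finite ι] {f : ι → X → Y} {x : X}
    (hf : ∀ i, ContinuousAt (f i) x) (hinj : Function.Injective fun i => f i x) :
    ∀ᶠ y in 𝓝 x, Function.Injective fun i => f i y := by
  have h : ∀ᶠ y in 𝓝 x, ∀ i j, i ≠ j → f i y ≠ f j y := by
    simp only [eventually_all]
    exact fun i j hij => ((hf i).ne_iff_eventually_ne (hf j)).1 (hinj.ne hij)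
  exact h.mono fun y hy i j hfij => by_contra fun hij => hy i j hij hfij

theorem exists_injective_isRoot_of_nodup_roots {K : Type*} [Field K] [IsAlgClosed K]
    {Q : K[X]} {n : ℕ} (hQ : Q.roots.Nodup) (hn : Q.natDegree = n) :
    ∃ r : Fin n → K, Function.Injective r ∧ ∀ j, Q.IsRoot (r j) := by
  let e := (Finset.equivFinOfCardEq (s := ⟨Q.roots, hQ⟩)
    (IsAlgClosed.card_roots_eq_natDegree.trans hn)).symm
  exact ⟨fun j => e j, fun a b h => e.injective (Subtype.ext h),
    fun j => isRoot_of_mem_roots (e j).2⟩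

namespace Lagrange

variable {K ι : Type*} [Field K] {s : Finset ι} {v : ι → K}

theorem eq_C_leadingCoeff_mul_nodal {Q : K[X]} (hQ : Q.degree = #s) (hv : Set.InjOn v s)
    (hroot : ∀ i ∈ s, Q.IsRoot (v i)) : Q = C Q.leadingCoeff * nodal s v := by
  have hQ0 : Q.leadingCoeff ≠ 0 := by
    rw [Ne, leadingCoeff_eq_zero]; rintro rfl; simp at hQ
  refine eq_of_degree_le_of_eval_index_eq s hv hQ.le ?_ ?_ fun i hi => ?_
  · rw [degree_C_mul hQ0, degree_nodal, hQ]
  · rw [leadingCoeff_mul, leadingCoeff_C, nodal_monic.leadingCoeff, mul_one]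
  · rw [(hroot i hi).eq_zero, eval_mul, eval_nodal_at_node hi, mul_zero]

variable [DecidableEq ι]

theorem eval_derivative_nodal_of_forall_ne {x : K} (hx : ∀ i ∈ s, x ≠ v i) :
    eval x (derivative (nodal s v)) = eval x (nodal s v) * ∑ i ∈ s, 1 / (x - v i) := by
  rw [derivative_nodal, eval_finsetSum, mul_sum]
  refine sum_congr rfl fun i hi => ?_
  have hxi : x - v i ≠ 0 := sub_ne_zero.2 (hx i hi)
  rw [nodal_eq_mul_nodal_erase hi, eval_mul, eval_sub, eval_X, eval_C]
  field_simp

theorem eval_derivative_derivative_nodal_at_node (hv : Set.InjOn v s) {i : ι} (hi : i ∈ s) :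
    eval (v i) (derivative (derivative (nodal s v)))
      = 2 * eval (v i) (derivative (nodal s v)) * ∑ k ∈ s.erase i, 1 / (v i - v k) := by
  have hne : ∀ k ∈ s.erase i, v i ≠ v k := fun k hk hik =>
    (mem_erase.1 hk).1 (hv (mem_of_mem_erase hk) hi hik.symm)
  rw [eval_nodal_derivative_eval_node_eq hi, mul_assoc,
    ← eval_derivative_nodal_of_forall_ne hne, nodal_eq_mul_nodal_erase hi]
  simp only [derivative_mul, derivative_sub, derivative_X, derivative_C, sub_zero, one_mul,
    derivative_add, eval_add, eval_mul, eval_sub, eval_X, eval_C, sub_self, zero_mul, add_zero]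
  ring

theorem eval_derivative_C_mul_nodal_ne_zero {c : K} (hc : c ≠ 0) (hv : Set.InjOn v s) {i : ι}
    (hi : i ∈ s) : eval (v i) (derivative (C c * nodal s v)) ≠ 0 := by
  rw [derivative_C_mul, eval_mul, eval_C, eval_nodal_derivative_eval_node_eq hi]
  exact mul_ne_zero hc (eval_nodal_not_at_node fun k hk hik =>
    (mem_erase.1 hk).1 (hv (mem_of_mem_erase hk) hi hik.symm))

theorem eval_derivative_derivative_div_eval_derivative_C_mul_nodal {c : K} (hc : c ≠ 0)
    (hv : Set.InjOn v s) {i : ι} (hi : i ∈ s) :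
    eval (v i) (derivative (derivative (C c * nodal s v))) /
        eval (v i) (derivative (C c * nodal s v))
      = 2 * ∑ k ∈ s.erase i, 1 / (v i - v k) := by
  have hD := eval_derivative_C_mul_nodal_ne_zero hc hv hi
  rw [derivative_C_mul, eval_mul, eval_C] at hD
  rw [derivative_C_mul, derivative_C_mul, eval_mul, eval_mul, eval_C,
    eval_derivative_derivative_nodal_at_node hv hi]
  field_simp [right_ne_zero_of_mul hD]

end Lagrange

theorem hasStrictFDerivAt_eval_sum_smul {𝕜 ι : Type*} [NontriviallyNormedField 𝕜]
    (s : Finset ι) (P : ι → 𝕜[X]) {c : ι → 𝕜 → 𝕜} {c' : ι → 𝕜} {t y : 𝕜}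
    (hc : ∀ i ∈ s, HasStrictDerivAt (c i) (c' i) t) :
    HasStrictFDerivAt (fun w : 𝕜 × 𝕜 => eval w.2 (∑ i ∈ s, c i w.1 • P i))
      (eval y (∑ i ∈ s, c' i • P i) • ContinuousLinearMap.fst 𝕜 𝕜 𝕜 +
        eval y (derivative (∑ i ∈ s, c i t • P i)) • ContinuousLinearMap.snd 𝕜 𝕜 𝕜) (t, y) := by
  simp only [eval_finsetSum, derivative_sum, derivative_smul, eval_smul, smul_eq_mul]
  have hterm : ∀ i ∈ s, HasStrictFDerivAt (fun w : 𝕜 × 𝕜 => c i w.1 * eval w.2 (P i))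
      ((c' i * eval y (P i)) • ContinuousLinearMap.fst 𝕜 𝕜 𝕜 +
        (c i t * eval y (derivative (P i))) • ContinuousLinearMap.snd 𝕜 𝕜 𝕜) (t, y) := by
    intro i hi
    have hPi := HasStrictDerivAt.comp_hasStrictFDerivAt (f := Prod.snd) (t, y)
      ((P i).hasStrictDerivAt y) (hasStrictFDerivAt_snd (𝕜 := 𝕜) (p := (t, y)))
    refine (((hc i hi).comp_hasStrictFDerivAt (t, y) hasStrictFDerivAt_fst).mul hPi).congr_fderiv ?_
    ext <;> simp [mul_comm]
  refine (HasStrictFDerivAt.fun_sum hterm).congr_fderiv ?_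
  ext <;> simp

section HeatOperator

variable {N : ℕ} {σ : ℂ} {p : ℂ[X]}

theorem coeff_heatOp_of_natDegree_le {k : ℕ} (hk : p.natDegree ≤ k) :
    (heatOp N σ p).coeff k = p.coeff k := by
  rw [heatOp, finsetSum_coeff, sum_eq_single 0 (fun m _ hm => ?_) (by simp)]
  · simp
  · rw [coeff_smul, coeff_iterate_derivative, coeff_eq_zero_of_natDegree_lt (by omega),
      smul_zero, smul_zero]

theorem degree_heatOp : (heatOp N σ p).degree = p.degree := by
  refine le_antisymm (degree_le_iff_coeff_zero _ _ |>.2 fun k hk => ?_) ?_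
  · rw [coeff_heatOp_of_natDegree_le (natDegree_le_iff_degree_le.2 hk.le),
      coeff_eq_zero_of_degree_lt hk]
  · rcases eq_or_ne p 0 with rfl | hp
    · simp
    · rw [degree_eq_natDegree hp]
      refine le_degree_of_ne_zero ?_
      rw [coeff_heatOp_of_natDegree_le le_rfl]
      exact leadingCoeff_ne_zero.2 hp

theorem natDegree_heatOp : (heatOp N σ p).natDegree = p.natDegree :=
  natDegree_eq_of_degree_eq degree_heatOp

theorem leadingCoeff_heatOp : (heatOp N σ p).leadingCoeff = p.leadingCoeff := by
  rw [leadingCoeff, natDegree_heatOp, coeff_heatOp_of_natDegree_le le_rfl, leadingCoeff]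

theorem heatOp_eq_C_leadingCoeff_mul_nodal (hp : p ≠ 0) (hdeg : p.natDegree = N)
    {w : Fin N → ℂ} (hw : Function.Injective w) (hroot : ∀ j, (heatOp N σ p).IsRoot (w j)) :
    heatOp N σ p = C p.leadingCoeff * Lagrange.nodal univ w := by
  have hdegσ : (heatOp N σ p).degree = #(univ : Finset (Fin N)) := by
    rw [degree_heatOp, degree_eq_natDegree hp, hdeg, card_univ, Fintype.card_fin]
  simpa [leadingCoeff_heatOp] using
    Lagrange.eq_C_leadingCoeff_mul_nodal hdegσ hw.injOn fun i _ => hroot i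

theorem heatOp_heat_equation (x : ℂ) :
    ∑ m ∈ range (p.natDegree + 1),
        ((m : ℂ) * (x / (2 * N)) ^ (m - 1) * (1 / (2 * N)) / (Nat.factorial m : ℂ)) •
          derivative^[2 * m] p
      = (1 / (2 * N) : ℂ) • derivative (derivative (heatOp N x p)) := by
  have hD2 : ∀ m, derivative (derivative (derivative^[2 * m] p)) = derivative^[2 * (m + 1)] p :=
    fun m => by
      rw [show 2 * (m + 1) = 2 * m + 1 + 1 by ring, Function.iterate_succ_apply',
        Function.iterate_succ_apply']
  rw [heatOp, derivative_sum, derivative_sum, smul_sum, sum_range_succ', sum_range_succ]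
  simp only [derivative_smul, hD2,
    iterate_derivative_eq_zero (by omega : p.natDegree < 2 * (p.natDegree + 1)),
    smul_zero, add_zero, Nat.cast_zero, zero_mul, zero_div, zero_smul, smul_smul]
  refine sum_congr rfl fun m _ => ?_
  congr 1
  rw [Nat.factorial_succ]
  push_cast
  field_simp

theorem hasStrictFDerivAt_eval_heatOp (N : ℕ) (τ₀ : ℂ) (p : ℂ[X]) (w : ℂ × ℂ) :
    HasStrictFDerivAt (fun w : ℂ × ℂ => eval w.2 (heatOp N (w.1 - τ₀) p))
      ((1 / (2 * N) * eval w.2 (derivative (derivative (heatOp N (w.1 - τ₀) p)))) •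
          ContinuousLinearMap.fst ℂ ℂ ℂ +
        eval w.2 (derivative (heatOp N (w.1 - τ₀) p)) • ContinuousLinearMap.snd ℂ ℂ ℂ) w := by
  obtain ⟨t, y⟩ := w
  have hc : ∀ m ∈ range (p.natDegree + 1),
      HasStrictDerivAt (fun τ => ((τ - τ₀) / (2 * N)) ^ m / (Nat.factorial m : ℂ))
        ((m : ℂ) * ((t - τ₀) / (2 * N)) ^ (m - 1) * (1 / (2 * N)) / (Nat.factorial m : ℂ)) t :=
    fun m _ => by
      simpa using ((((hasStrictDerivAt_id t).sub (hasStrictDerivAt_const t τ₀)).div_const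
        (2 * N : ℂ)).pow m).div_const (Nat.factorial m : ℂ)
  have h := hasStrictFDerivAt_eval_sum_smul _ (fun m => derivative^[2 * m] p) hc (y := y)
  rwa [heatOp_heat_equation, eval_smul, smul_eq_mul] at h

end HeatOperator

theorem stmt0 (N : ℕ) (hN : 0 < N) (p : Polynomial ℂ) (hdeg : p.natDegree = N)
    (τ₀ σ : ℂ)
    (hroots : ((heatOp N (σ - τ₀) p).roots).Nodup) :
    ∃ V : Set ℂ, IsOpen V ∧ σ ∈ V ∧
      ∃ z : Fin N → ℂ → ℂ,
        (∀ j, DifferentiableOn ℂ (z j) V) ∧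
        (∀ τ ∈ V,
          heatOp N (τ - τ₀) p
            = Polynomial.C p.leadingCoeff * ∏ j, (Polynomial.X - Polynomial.C (z j τ))) ∧
        (∀ τ ∈ V, ∀ j k : Fin N, j ≠ k → z j τ ≠ z k τ) ∧
        (∀ j : Fin N, ∀ τ ∈ V,
          HasDerivAt (z j)
            (-(1 / (N : ℂ)) * ∑ k ∈ Finset.univ.erase j, 1 / (z j τ - z k τ)) τ) := by
  have hp : p ≠ 0 := by rintro rfl; simp at hdeg; omega
  have hc : p.leadingCoeff ≠ 0 := leadingCoeff_ne_zero.2 hp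
  have hsimple : ∀ τ (w : Fin N → ℂ), Function.Injective w →
      (∀ j, (heatOp N (τ - τ₀) p).IsRoot (w j)) →
        ∀ j, eval (w j) (derivative (heatOp N (τ - τ₀) p)) ≠ 0 := fun τ w hw hroot j => by
    rw [heatOp_eq_C_leadingCoeff_mul_nodal hp hdeg hw hroot]
    exact Lagrange.eval_derivative_C_mul_nodal_ne_zero hc hw.injOn (mem_univ j)
  obtain ⟨r, hr_inj, hr_root⟩ := exists_injective_isRoot_of_nodup_roots hroots
    (natDegree_heatOp.trans hdeg)
  choose z hzσ hz using fun j => exists_eventually_implicit_hasDerivAt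
    (hasStrictFDerivAt_eval_heatOp N τ₀ p) (u := (σ, r j)) (hr_root j)
    (hsimple σ r hr_inj hr_root j)
  have hinjσ : ∀ᶠ s in 𝓝 σ, Function.Injective fun j => z j s := by
    refine eventually_injective_of_continuousAt (fun j => ?_) (by simpa [hzσ] using hr_inj)
    refine ((hz j).self_of_nhds.2 ?_).continuousAt
    simpa [hzσ] using hsimple σ r hr_inj hr_root j
  obtain ⟨V, hVgood, hVopen, hσV⟩ := mem_nhds_iff.1 ((eventually_all.2 hz).and hinjσ)
  have hroot : ∀ τ ∈ V, ∀ k, (heatOp N (τ - τ₀) p).IsRoot (z k τ) :=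
    fun τ hτ k => ((hVgood hτ).1 k).1
  have hvel : ∀ τ ∈ V, ∀ j, HasDerivAt (z j)
      (-(1 / (N : ℂ)) * ∑ k ∈ univ.erase j, 1 / (z j τ - z k τ)) τ := fun τ hτ j => by
    have hinj := (hVgood hτ).2
    refine (((hVgood hτ).1 j).2 (hsimple τ _ hinj (hroot τ hτ) j)).congr_deriv ?_
    dsimp only
    rw [mul_div_assoc, heatOp_eq_C_leadingCoeff_mul_nodal hp hdeg hinj (hroot τ hτ),
      Lagrange.eval_derivative_derivative_div_eval_derivative_C_mul_nodal hc hinj.injOn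
        (mem_univ j)]
    ring
  exact ⟨V, hVopen, hσV, z, fun j τ hτ => (hvel τ hτ j).differentiableAt.differentiableWithinAt,
    fun τ hτ => heatOp_eq_C_leadingCoeff_mul_nodal hp hdeg (hVgood hτ).2 (hroot τ hτ),
    fun τ hτ j k hjk => (hVgood hτ).2.ne hjk, fun j τ hτ => hvel τ hτ j⟩
end

section
/- Let N be a positive integer, U ⊆ ℂ an open set, and z_1, …, z_N : U → ℂ holomorphic functions whose values z_1(τ), …, z_N(τ) are pairwise distinct for each τ ∈ U and which satisfy the system z_j'(τ) = −(1/N) ∑_{k ≠ j} 1/(z_j(τ) − z_k(τ)) for all j and all τ ∈ U. Then for every j and every τ ∈ U, the second derivative satisfies z_j''(τ) = −(2/N²) ∑_{k ≠ j} 1/(z_j(τ) − z_k(τ))³. (These are the equations of motion of the rational Calogero–Moser system.) -/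
/-!
Write `V_j = ∑_{k ≠ j} 1/(z_j - z_k)`, so that the system reads `z_j' = -V_j/N`. Differentiating
`V_j` gives `z_j'' = -(1/N²) ∑_{k ≠ j} (V_j - V_k)/(z_j - z_k)²`. In `V_j - V_k` the pair `{j, k}`
contributes `2/(z_j - z_k)`, which produces the claimed cubic sum; what remains is a sum over
ordered pairs `(k, l)` of distinct indices other than `j` that is antisymmetric in `(k, l)`, hence
vanishes.
-/

open Finset Filter Topology

theorem Finset.sum_sum_erase_eq_zero_of_antisymm {ι M : Type*} [DecidableEq ι]
    [AddCommMonoid M] {s : Finset ι} {g : ι → ι → M}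
    (hg : ∀ k ∈ s, ∀ l ∈ s, k ≠ l → g k l + g l k = 0) :
    ∑ k ∈ s, ∑ l ∈ s.erase k, g k l = 0 := by
  rw [← sum_finset_product' s.offDiag s (fun k => s.erase k) (by simp [and_comm, eq_comm])]
  refine sum_involution (fun p _ => p.swap) (fun p hp => ?_) (fun p hp _ => ?_) (fun p hp => ?_)
    fun p _ => p.swap_swap
  all_goals obtain ⟨hk, hl, hkl⟩ := mem_offDiag.1 hp
  · exact hg _ hk _ hl hkl
  · exact fun h => hkl (congrArg Prod.snd h)
  · exact mem_offDiag.2 ⟨hl, hk, hkl.symm⟩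

section Repulsion

variable {K ι : Type*} [Field K] [Fintype ι] [DecidableEq ι]

def repulsion (w : ι → K) (j : ι) : K :=
  ∑ k ∈ univ.erase j, 1 / (w j - w k)

theorem repulsion_sub_repulsion (w : ι → K) {j k : ι} (hjk : j ≠ k) :
    repulsion w j - repulsion w k =
      2 / (w j - w k) + ∑ l ∈ (univ.erase j).erase k, (1 / (w j - w l) - 1 / (w k - w l)) := by
  rw [repulsion, repulsion, ← add_sum_erase _ _ (mem_erase.2 ⟨hjk.symm, mem_univ k⟩),
    ← add_sum_erase _ _ (mem_erase.2 ⟨hjk, mem_univ j⟩), erase_right_comm, sum_sub_distrib,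
    ← neg_sub (w j), div_neg]
  ring

theorem inv_sub_inv_div_sq_add_swap {a b c : K} (hab : a ≠ b) (hac : a ≠ c) (hbc : b ≠ c) :
    (1 / (a - c) - 1 / (b - c)) / (a - b) ^ 2 + (1 / (a - b) - 1 / (c - b)) / (a - c) ^ 2 = 0 := by
  have := sub_ne_zero.2 hab
  have := sub_ne_zero.2 hac
  have := sub_ne_zero.2 hbc
  have := sub_ne_zero.2 hbc.symm
  field_simp
  ring

theorem sum_repulsion_sub_div_sq {w : ι → K} (hw : Function.Injective w) (j : ι) :
    ∑ k ∈ univ.erase j, (repulsion w j - repulsion w k) / (w j - w k) ^ 2 =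
      2 * ∑ k ∈ univ.erase j, 1 / (w j - w k) ^ 3 := by
  have hsplit : ∀ k ∈ univ.erase j, (repulsion w j - repulsion w k) / (w j - w k) ^ 2 =
      2 * (1 / (w j - w k) ^ 3) + ∑ l ∈ (univ.erase j).erase k,
        (1 / (w j - w l) - 1 / (w k - w l)) / (w j - w k) ^ 2 := by
    intro k hk
    have hjk : w j - w k ≠ 0 := sub_ne_zero.2 (hw.ne (ne_of_mem_erase hk).symm)
    rw [repulsion_sub_repulsion w (ne_of_mem_erase hk).symm, add_div, ← sum_div]
    field_simp
  rw [sum_congr rfl hsplit, sum_add_distrib, ← mul_sum, add_eq_left]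
  refine sum_sum_erase_eq_zero_of_antisymm fun k hk l hl hkl => ?_
  exact inv_sub_inv_div_sq_add_swap (hw.ne (ne_of_mem_erase hk).symm)
    (hw.ne (ne_of_mem_erase hl).symm) (hw.ne hkl)

end Repulsion

theorem hasDerivAt_repulsion {𝕜 ι : Type*} [NontriviallyNormedField 𝕜] [Fintype ι]
    [DecidableEq ι] {z : ι → 𝕜 → 𝕜} {z' : ι → 𝕜} {τ : 𝕜} (hz : ∀ i, HasDerivAt (z i) (z' i) τ)
    {j : ι} (hne : ∀ k, j ≠ k → z j τ ≠ z k τ) :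
    HasDerivAt (fun σ => repulsion (z · σ) j)
      (-∑ k ∈ univ.erase j, (z' j - z' k) / (z j τ - z k τ) ^ 2) τ := by
  simp only [repulsion, one_div, ← sum_neg_distrib, ← neg_div]
  exact HasDerivAt.fun_sum fun k hk =>
    ((hz j).sub (hz k)).inv (sub_ne_zero.2 (hne k (ne_of_mem_erase hk).symm))

theorem stmt1_general (N : ℕ) (U : Set ℂ) (hU : IsOpen U)
    (z : Fin N → ℂ → ℂ)
    (hdist : ∀ τ ∈ U, ∀ j k : Fin N, j ≠ k → z j τ ≠ z k τ)
    (hode : ∀ j : Fin N, ∀ τ ∈ U,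
      HasDerivAt (z j)
        (-(1 / (N : ℂ)) * ∑ k ∈ Finset.univ.erase j, 1 / (z j τ - z k τ)) τ)
    (j : Fin N) (τ : ℂ) (hτ : τ ∈ U) :
    HasDerivAt (deriv (z j))
      (-(2 / (N : ℂ) ^ 2) * ∑ k ∈ Finset.univ.erase j, 1 / (z j τ - z k τ) ^ 3) τ := by
  have hinj : Function.Injective (z · τ) := fun a b hab => by_contra fun h => hdist τ hτ a b h hab
  have hvel : ∀ i, HasDerivAt (z i) (-(1 / (N : ℂ)) * repulsion (z · τ) i) τ :=
    fun i => hode i τ hτ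
  have hderiv : deriv (z j) =ᶠ[𝓝 τ] fun σ => -(1 / (N : ℂ)) * repulsion (z · σ) j :=
    eventually_of_mem (hU.mem_nhds hτ) fun σ hσ => (hode j σ hσ).deriv
  refine (((hasDerivAt_repulsion hvel (hdist τ hτ j)).const_mul _).congr_of_eventuallyEq
    hderiv).congr_deriv ?_
  simp_rw [← mul_sub, mul_div_assoc, ← mul_sum, sum_repulsion_sub_div_sq hinj]
  ring

theorem stmt1 (N : ℕ) (hN : 0 < N) (U : Set ℂ) (hU : IsOpen U)
    (z : Fin N → ℂ → ℂ)
    (hdist : ∀ τ ∈ U, ∀ j k : Fin N, j ≠ k → z j τ ≠ z k τ)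
    (hode : ∀ j : Fin N, ∀ τ ∈ U,
      HasDerivAt (z j)
        (-(1 / (N : ℂ)) * ∑ k ∈ Finset.univ.erase j, 1 / (z j τ - z k τ)) τ)
    (j : Fin N) (τ : ℂ) (hτ : τ ∈ U) :
    HasDerivAt (deriv (z j))
      (-(2 / (N : ℂ) ^ 2) * ∑ k ∈ Finset.univ.erase j, 1 / (z j τ - z k τ) ^ 3) τ :=
  stmt1_general N U hU z hdist hode j τ hτ
end

section
/- Let N be a positive integer, let p ∈ ℂ[z] be a polynomial of degree N, fix τ₀ ∈ ℂ, and for τ ∈ ℂ let q_τ = exp(−((τ−τ₀)/(2N)) L_N) p. Suppose that for some σ ∈ ℂ the N roots of q_σ are nonzero and distinct. Then there exist an open neighborhood V of σ and holomorphic functions z_1, …, z_N : V → ℂ such that for every τ ∈ V the values z_1(τ), …, z_N(τ) are the roots of q_τ, are nonzero and pairwise distinct, and satisfy for every j: (1/z_j(τ)) z_j'(τ) = (1/(2N)) [ 1 + ∑_{k ≠ j} (z_j(τ) + z_k(τ)) / (z_j(τ) − z_k(τ)) ]. -/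
open Polynomial Finset

/-- The operator `exp(c L_N)` on polynomials of degree at most `N`, where
`(L_N p)(z) = z² p''(z) − (N−2) z p'(z) − N p(z)`.  Since `L_N` acts diagonally on
monomials, `L_N(z^k) = (k−N)(k+1) z^k`, the exponential multiplies the coefficient
of `z^k` by `exp(c (k−N)(k+1))`. -/
noncomputable def multHeatOp (N : ℕ) (c : ℂ) (p : Polynomial ℂ) : Polynomial ℂ :=
  ∑ k ∈ Finset.range (N + 1),
    Polynomial.C (Complex.exp (c * ((k : ℂ) - N) * ((k : ℂ) + 1)) * p.coeff k)
      * Polynomial.X ^ k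

/-!
Because the roots of `q_σ` are simple, the holomorphic implicit function theorem continues each
of them to a holomorphic root `z_j` of `q_τ` for `τ` near `σ`, and near `σ` these stay nonzero and
distinct. Differentiating `q_τ(z_j(τ)) = 0` gives `z_j' = -(∂_τ q_τ)(z_j) / q_τ'(z_j)` with
`∂_τ q_τ = -(1/(2N)) L_N q_τ`. At a root, `(L_N q_τ)(z_j) = z_j² q_τ''(z_j) - (N-2) z_j q_τ'(z_j)`,
and writing `q_τ = c ∏ₖ (z - z_k)` gives `q_τ''(z_j) = 2 q_τ'(z_j) ∑_{k ≠ j} 1/(z_j - z_k)`,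
which turns the quotient into the stated sum.
-/

open Filter Topology

section Implicit

variable {𝕜 : Type*} [NontriviallyNormedField 𝕜]

theorem ContinuousLinearMap.isInvertible_of_apply_one_ne_zero {g : 𝕜 →L[𝕜] 𝕜} (hg : g 1 ≠ 0) :
    g.IsInvertible :=
  ⟨ContinuousLinearEquiv.unitsEquivAut 𝕜 (Units.mk0 (g 1) hg),
    ContinuousLinearMap.ext_ring (by simp)⟩

variable {E G : Type*} [NormedAddCommGroup E] [NormedSpace 𝕜 E] [NormedAddCommGroup G]
  [NormedSpace 𝕜 G]

theorem HasFDerivAt.hasDerivAt_prodMk_left {F : 𝕜 × E → G} {F' : 𝕜 × E →L[𝕜] G} {a : 𝕜} {b : E}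
    (hF : HasFDerivAt F F' (a, b)) : HasDerivAt (fun s => F (s, b)) (F' (1, 0)) a :=
  hF.comp_hasDerivAt a ((hasDerivAt_id a).prodMk (hasDerivAt_const a b))

theorem HasFDerivAt.hasDerivAt_prodMk_right {F : E × 𝕜 → G} {F' : E × 𝕜 →L[𝕜] G} {a : E} {b : 𝕜}
    (hF : HasFDerivAt F F' (a, b)) : HasDerivAt (fun z => F (a, z)) (F' (0, 1)) b :=
  hF.comp_hasDerivAt b ((hasDerivAt_const b a).prodMk (hasDerivAt_id b))

theorem hasDerivAt_of_eventually_apply_prodMk_eq_zero {F : 𝕜 × 𝕜 → 𝕜} {w : 𝕜 → 𝕜} {t A B : 𝕜}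
    (hF : DifferentiableAt 𝕜 F (t, w t)) (hA : HasDerivAt (fun s => F (s, w t)) A t)
    (hB : HasDerivAt (fun z => F (t, z)) B (w t)) (hB0 : B ≠ 0) (hw : DifferentiableAt 𝕜 w t)
    (hroot : ∀ᶠ s in 𝓝 t, F (s, w s) = 0) : HasDerivAt w (-A / B) t := by
  have hF' := hF.hasFDerivAt
  have hchain : HasDerivAt (fun s => F (s, w s)) (A + deriv w t * B) t := by
    have hsplit : ((1 : 𝕜), deriv w t) = (1, 0) + deriv w t • (0, 1) := by simp
    rw [← hF'.hasDerivAt_prodMk_left.unique hA, ← hF'.hasDerivAt_prodMk_right.unique hB,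
      ← smul_eq_mul, ← map_smul, ← map_add, ← hsplit]
    exact hF'.comp_hasDerivAt t ((hasDerivAt_id t).prodMk hw.hasDerivAt)
  have hzero : A + deriv w t * B = 0 :=
    hchain.unique ((hasDerivAt_const t (0 : 𝕜)).congr_of_eventuallyEq hroot)
  rw [show -A / B = deriv w t by rw [div_eq_iff hB0]; linear_combination -hzero]
  exact hw.hasDerivAt

end Implicit

theorem exists_eventually_differentiableAt_root {𝕜 E : Type*} [RCLike 𝕜] [NormedAddCommGroup E]
    [NormedSpace 𝕜 E] [CompleteSpace E] {F : E × 𝕜 → 𝕜} {u : E × 𝕜} {B : 𝕜}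
    (hF : ContDiffAt 𝕜 1 F u) (hu : F u = 0) (hB : HasDerivAt (fun z => F (u.1, z)) B u.2)
    (hB0 : B ≠ 0) :
    ∃ w : E → 𝕜, w u.1 = u.2 ∧ ∀ᶠ x in 𝓝 u.1, DifferentiableAt 𝕜 w x ∧ F (x, w x) = 0 := by
  have hinv : (fderiv 𝕜 F u ∘L .inr 𝕜 E 𝕜).IsInvertible := by
    refine ContinuousLinearMap.isInvertible_of_apply_one_ne_zero ?_
    have := (hF.differentiableAt one_ne_zero).hasFDerivAt.hasDerivAt_prodMk_right.unique hB
    simpa [this] using hB0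
  refine ⟨hF.implicitFunction one_ne_zero hinv, hF.implicitFunction_apply_self one_ne_zero hinv,
    ?_⟩
  filter_upwards [(hF.contDiffAt_implicitFunction one_ne_zero hinv).eventually (by simp),
    hF.eventually_apply_implicitFunction one_ne_zero hinv] with x hdiff hroot
  exact ⟨hdiff.differentiableAt one_ne_zero, hroot.trans hu⟩

theorem ContinuousAt.eventually_injective {ι X Y : Type*} [Finite ι] [TopologicalSpace X]
    [TopologicalSpace Y] [T2Space Y] {f : ι → X → Y} {x : X} (hf : ∀ i, ContinuousAt (f i) x)
    (hinj : Function.Injective fun i => f i x) :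
    ∀ᶠ y in 𝓝 x, Function.Injective fun i => f i y := by
  have : ∀ᶠ y in 𝓝 x, ∀ i j, i ≠ j → f i y ≠ f j y :=
    eventually_all.2 fun i => eventually_all.2 fun j => by
      by_cases hij : i = j
      · exact Eventually.of_forall fun _ h => absurd hij h
      · filter_upwards [((hf i).ne_iff_eventually_ne (hf j)).1 (hinj.ne hij)] with y hy _ using hy
  filter_upwards [this] with y hy i j hfij
  by_contra hij
  exact hy i j hij hfij

namespace Polynomial

section CommRing

variable {R : Type*} [CommRing R]

theorem eval_derivative_X_sub_C_mul (a : R) (r : R[X]) :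
    (derivative ((X - C a) * r)).eval a = r.eval a := by
  simp

theorem eval_derivative_derivative_X_sub_C_mul (a : R) (r : R[X]) :
    (derivative (derivative ((X - C a) * r))).eval a = 2 * (derivative r).eval a := by
  simp only [derivative_mul, derivative_sub, derivative_X, derivative_C, sub_zero, one_mul,
    derivative_add, eval_add, eval_mul, eval_sub, eval_X, eval_C, sub_self, zero_mul, add_zero]
  ring

variable {ι : Type*} [Fintype ι] [DecidableEq ι] (c : R) {b : ι → R}

theorem C_mul_prod_X_sub_C_eq_X_sub_C_mul (j : ι) :
    C c * ∏ k, (X - C (b k)) = (X - C (b j)) * (C c * ∏ k ∈ univ.erase j, (X - C (b k))) := by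
  rw [← mul_prod_erase univ _ (mem_univ j)]
  ring

theorem eval_derivative_C_mul_prod_X_sub_C (j : ι) :
    (derivative (C c * ∏ k, (X - C (b k)))).eval (b j) = c * ∏ k ∈ univ.erase j, (b j - b k) := by
  rw [C_mul_prod_X_sub_C_eq_X_sub_C_mul c j, eval_derivative_X_sub_C_mul]
  simp [eval_prod]

end CommRing

variable {K : Type*} [Field K]

theorem exists_injective_fin_roots {q : K[X]} {n : ℕ} (hq : q.roots.Nodup)
    (hcard : Multiset.card q.roots = n) :
    ∃ a : Fin n → K, Function.Injective a ∧ ∀ i, a i ∈ q.roots := by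
  classical
  have hs : Fintype.card q.roots.toFinset = n := by
    rw [Fintype.card_coe, Multiset.toFinset_card_of_nodup hq, hcard]
  set e := Fintype.equivFinOfCardEq hs
  exact ⟨fun i => e.symm i, Subtype.val_injective.comp e.symm.injective,
    fun i => Multiset.mem_toFinset.1 (e.symm i).2⟩

theorem eq_C_leadingCoeff_mul_prod_X_sub_C {ι : Type*} [Fintype ι] {q : K[X]}
    (hq : q.natDegree = Fintype.card ι) {b : ι → K} (hb : Function.Injective b)
    (hroot : ∀ i, q.IsRoot (b i)) :
    q = C q.leadingCoeff * ∏ i, (X - C (b i)) := by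
  rcases eq_or_ne q 0 with rfl | hq0
  · simp
  have hroots : univ.val.map b = q.roots := by
    refine Multiset.eq_of_le_of_card_le
      ((Multiset.le_iff_subset (univ.nodup.map hb)).2 fun x hx => ?_) ?_
    · obtain ⟨i, -, rfl⟩ := Multiset.mem_map.1 hx
      exact (mem_roots hq0).2 (hroot i)
    · simpa [hq] using card_roots' q
  have hcard : Multiset.card q.roots = q.natDegree := by simp [← hroots, hq]
  calc q = C q.leadingCoeff * (q.roots.map fun a => X - C a).prod :=
        (C_leadingCoeff_mul_prod_multiset_X_sub_C hcard).symm
    _ = C q.leadingCoeff * ∏ i, (X - C (b i)) := by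
        rw [← hroots, Multiset.map_map, prod_eq_multiset_prod]; rfl

theorem eval_derivative_prod_X_sub_C {ι : Type*} [DecidableEq ι] (s : Finset ι) (b : ι → K)
    {x : K} (hx : ∀ i ∈ s, x ≠ b i) :
    (derivative (∏ i ∈ s, (X - C (b i)))).eval x
      = (∏ i ∈ s, (x - b i)) * ∑ i ∈ s, (x - b i)⁻¹ := by
  rw [derivative_prod_finset, eval_finsetSum, mul_sum]
  refine sum_congr rfl fun i hi => ?_
  have hxi : x - b i ≠ 0 := sub_ne_zero.2 (hx i hi)
  rw [← mul_prod_erase s (fun k => x - b k) hi]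
  simp only [derivative_sub, derivative_X, derivative_C, sub_zero, mul_one, eval_prod, eval_sub,
    eval_X, eval_C]
  field_simp

variable {ι : Type*} [Fintype ι] [DecidableEq ι] {c : K} {b : ι → K}

theorem eval_derivative_C_mul_prod_X_sub_C_ne_zero (hc : c ≠ 0) (hb : Function.Injective b)
    (j : ι) : (derivative (C c * ∏ k, (X - C (b k)))).eval (b j) ≠ 0 := by
  rw [eval_derivative_C_mul_prod_X_sub_C]
  exact mul_ne_zero hc
    (prod_ne_zero_iff.2 fun k hk => sub_ne_zero.2 (hb.ne (ne_of_mem_erase hk).symm))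

theorem eval_derivative_derivative_C_mul_prod_X_sub_C (hb : Function.Injective b) (j : ι) :
    (derivative (derivative (C c * ∏ k, (X - C (b k))))).eval (b j)
      = 2 * (derivative (C c * ∏ k, (X - C (b k)))).eval (b j)
          * ∑ k ∈ univ.erase j, (b j - b k)⁻¹ := by
  have hne : ∀ k ∈ univ.erase j, b j ≠ b k := fun k hk => hb.ne (ne_of_mem_erase hk).symm
  rw [eval_derivative_C_mul_prod_X_sub_C c, C_mul_prod_X_sub_C_eq_X_sub_C_mul c j,
    eval_derivative_derivative_X_sub_C_mul, derivative_C_mul, eval_C_mul,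
    eval_derivative_prod_X_sub_C _ _ hne]
  ring

end Polynomial

/-- The operator `L_N`; `multHeatOp N c` is `exp (c L_N)`. -/
noncomputable def heatGenerator (N : ℕ) : ℂ[X] →ₗ[ℂ] ℂ[X] where
  toFun q := X ^ 2 * derivative (derivative q) - C ((N : ℂ) - 2) * X * derivative q - C (N : ℂ) * q
  map_add' q r := by simp only [map_add]; ring
  map_smul' a q := by simp only [smul_eq_C_mul, derivative_C_mul, RingHom.id_apply]; ring

theorem heatGenerator_apply (N : ℕ) (q : ℂ[X]) :
    heatGenerator N q
      = X ^ 2 * derivative (derivative q) - C ((N : ℂ) - 2) * X * derivative q - C (N : ℂ) * q :=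
  rfl

theorem heatGenerator_C_mul_X_pow (N k : ℕ) (a : ℂ) :
    heatGenerator N (C a * X ^ k) = C (((k : ℂ) - N) * ((k : ℂ) + 1) * a) * X ^ k := by
  rw [heatGenerator_apply]
  rcases k with _ | _ | k
  · simp
  · simp only [zero_add, pow_one, derivative_mul, derivative_C, zero_mul, derivative_X, mul_one,
      mul_zero, map_sub, map_natCast, map_ofNat, zero_sub, map_mul, map_one, map_add]
    ring
  · simp only [derivative_mul, derivative_C, zero_mul, derivative_X_pow_succ, Nat.cast_add,
      Nat.cast_one, map_add, map_natCast, map_one, zero_add, derivative_natCast, derivative_one,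
      add_zero, map_sub, map_ofNat, map_mul]
    ring

theorem eval_heatGenerator_div_eval_derivative {N : ℕ} {c : ℂ} (hc : c ≠ 0) {b : Fin N → ℂ}
    (hb : Function.Injective b) (j : Fin N) :
    (heatGenerator N (C c * ∏ k, (X - C (b k)))).eval (b j)
        / (derivative (C c * ∏ k, (X - C (b k)))).eval (b j)
      = b j * (1 + ∑ k ∈ univ.erase j, (b j + b k) / (b j - b k)) := by
  have hD := eval_derivative_C_mul_prod_X_sub_C_ne_zero hc hb j
  have hsub : ∀ k ∈ univ.erase j, b j - b k ≠ 0 := fun k hk =>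
    sub_ne_zero.2 (hb.ne (ne_of_mem_erase hk).symm)
  have hcard : ((univ.erase j).card : ℂ) = N - 1 := by
    rw [card_erase_of_mem (mem_univ j), card_univ, Fintype.card_fin, Nat.cast_pred j.pos]
  have hsum : ∑ k ∈ univ.erase j, (b j + b k) / (b j - b k)
      = 2 * b j * ∑ k ∈ univ.erase j, (b j - b k)⁻¹ - ((N : ℂ) - 1) :=
    calc ∑ k ∈ univ.erase j, (b j + b k) / (b j - b k)
        = ∑ k ∈ univ.erase j, (2 * b j * (b j - b k)⁻¹ - 1) :=
          sum_congr rfl fun k hk => by field_simp [hsub k hk]; ring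
      _ = _ := by rw [sum_sub_distrib, ← mul_sum, sum_const, nsmul_one, hcard]
  have hroot : (C c * ∏ k, (X - C (b k))).eval (b j) = 0 := by
    simp [eval_prod, prod_eq_zero (mem_univ j)]
  rw [heatGenerator_apply]
  simp only [eval_sub, eval_mul, eval_pow, eval_X, eval_C, hroot,
    eval_derivative_derivative_C_mul_prod_X_sub_C hb, hsum]
  field_simp
  ring

theorem hasDerivAt_eval_multHeatOp (N : ℕ) (p : ℂ[X]) (c z : ℂ) :
    HasDerivAt (fun c => (multHeatOp N c p).eval z)
      ((heatGenerator N (multHeatOp N c p)).eval z) c := by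
  simp only [multHeatOp, map_sum, heatGenerator_C_mul_X_pow, eval_finsetSum, eval_mul, eval_C,
    eval_pow, eval_X]
  refine HasDerivAt.fun_sum fun k _ => ?_
  have := (((((hasDerivAt_id c).mul_const ((k : ℂ) - N)).mul_const ((k : ℂ) + 1)).cexp).mul_const
    (p.coeff k)).mul_const (z ^ k)
  exact this.congr_deriv (by simp only [id]; ring)

theorem coeff_multHeatOp (N : ℕ) (c : ℂ) (p : ℂ[X]) (k : ℕ) :
    (multHeatOp N c p).coeff k
      = if k ≤ N then Complex.exp (c * ((k : ℂ) - N) * ((k : ℂ) + 1)) * p.coeff k else 0 := by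
  simp only [multHeatOp, finsetSum_coeff, coeff_C_mul_X_pow, sum_ite_eq, mem_range,
    Nat.lt_succ_iff]

theorem natDegree_multHeatOp {N : ℕ} {p : ℂ[X]} (hp : p.natDegree = N) (c : ℂ) :
    (multHeatOp N c p).natDegree = N := by
  rcases eq_or_ne p 0 with rfl | hp0
  · simpa [multHeatOp] using hp
  refine natDegree_eq_of_le_of_coeff_ne_zero
    (natDegree_le_iff_coeff_eq_zero.2 fun m hm => ?_) ?_
  · simp [coeff_multHeatOp, Nat.not_le.2 hm]
  · simp [coeff_multHeatOp, ← hp, hp0]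

theorem leadingCoeff_multHeatOp {N : ℕ} {p : ℂ[X]} (hp : p.natDegree = N) (c : ℂ) :
    (multHeatOp N c p).leadingCoeff = p.leadingCoeff := by
  rw [leadingCoeff, natDegree_multHeatOp hp, coeff_multHeatOp, leadingCoeff, hp]
  simp

/-- `q_τ` of the statement. -/
noncomputable def heatFlow (N : ℕ) (p : ℂ[X]) (τ₀ τ : ℂ) : ℂ[X] :=
  multHeatOp N (-(τ - τ₀) / (2 * N)) p

section HeatFlow

variable {N : ℕ} {p : ℂ[X]} {τ₀ : ℂ}

theorem hasDerivAt_eval_heatFlow (τ z : ℂ) :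
    HasDerivAt (fun τ => (heatFlow N p τ₀ τ).eval z)
      (-(heatGenerator N (heatFlow N p τ₀ τ)).eval z / (2 * N)) τ := by
  have := (hasDerivAt_eval_multHeatOp N p (-(τ - τ₀) / (2 * N)) z).comp τ
    (((hasDerivAt_id τ).sub_const τ₀).neg.div_const (2 * (N : ℂ)))
  exact this.congr_deriv (by simp [heatFlow]; ring)

theorem contDiff_eval_heatFlow {n : WithTop ℕ∞} :
    ContDiff ℂ n fun v : ℂ × ℂ => (heatFlow N p τ₀ v.1).eval v.2 := by
  simp only [heatFlow, multHeatOp, eval_finsetSum, eval_mul, eval_C, eval_pow, eval_X]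
  fun_prop

theorem heatFlow_eq_C_leadingCoeff_mul_prod (hp : p.natDegree = N) {τ : ℂ} {b : Fin N → ℂ}
    (hb : Function.Injective b) (hroot : ∀ k, (heatFlow N p τ₀ τ).IsRoot (b k)) :
    heatFlow N p τ₀ τ = C p.leadingCoeff * ∏ k, (X - C (b k)) := by
  have := eq_C_leadingCoeff_mul_prod_X_sub_C
    ((natDegree_multHeatOp hp _).trans (Fintype.card_fin N).symm) hb hroot
  rwa [leadingCoeff_multHeatOp hp] at this

theorem eval_derivative_heatFlow_ne_zero (hp : p.natDegree = N) {τ : ℂ} {b : Fin N → ℂ}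
    (hb : Function.Injective b) (hroot : ∀ k, (heatFlow N p τ₀ τ).IsRoot (b k)) (j : Fin N) :
    (derivative (heatFlow N p τ₀ τ)).eval (b j) ≠ 0 := by
  rw [heatFlow_eq_C_leadingCoeff_mul_prod hp hb hroot]
  exact eval_derivative_C_mul_prod_X_sub_C_ne_zero
    (leadingCoeff_ne_zero.2 (ne_zero_of_natDegree_gt (hp ▸ j.pos))) hb j

theorem hasDerivAt_of_isRoot_heatFlow (hp : p.natDegree = N) {z : Fin N → ℂ → ℂ} {τ : ℂ}
    (hinj : Function.Injective fun k => z k τ) (hroots : ∀ k, (heatFlow N p τ₀ τ).IsRoot (z k τ))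
    (j : Fin N) (hdiff : DifferentiableAt ℂ (z j) τ)
    (hroot : ∀ᶠ s in 𝓝 τ, (heatFlow N p τ₀ s).IsRoot (z j s)) :
    HasDerivAt (z j) (z j τ * ((1 / (2 * (N : ℂ))) *
      (1 + ∑ k ∈ univ.erase j, (z j τ + z k τ) / (z j τ - z k τ)))) τ := by
  have hvel := eval_heatGenerator_div_eval_derivative
    (leadingCoeff_ne_zero.2 (ne_zero_of_natDegree_gt (hp ▸ j.pos))) hinj j
  rw [← heatFlow_eq_C_leadingCoeff_mul_prod hp hinj hroots] at hvel
  refine (hasDerivAt_of_eventually_apply_prodMk_eq_zero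
    (F := fun v : ℂ × ℂ => (heatFlow N p τ₀ v.1).eval v.2)
    (contDiff_eval_heatFlow.differentiable one_ne_zero _) (hasDerivAt_eval_heatFlow τ (z j τ))
    ((heatFlow N p τ₀ τ).hasDerivAt (z j τ)) (eval_derivative_heatFlow_ne_zero hp hinj hroots j)
    hdiff hroot).congr_deriv ?_
  rw [mul_left_comm, ← hvel]
  ring

end HeatFlow

theorem stmt6_general (N : ℕ) (p : Polynomial ℂ) (hdeg : p.natDegree = N)
    (τ₀ σ : ℂ)
    (hroots : ((multHeatOp N (-(σ - τ₀) / (2 * N)) p).roots).Nodup)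
    (hroots0 : (0 : ℂ) ∉ (multHeatOp N (-(σ - τ₀) / (2 * N)) p).roots) :
    ∃ V : Set ℂ, IsOpen V ∧ σ ∈ V ∧
      ∃ z : Fin N → ℂ → ℂ,
        (∀ j, DifferentiableOn ℂ (z j) V) ∧
        (∀ τ ∈ V,
          multHeatOp N (-(τ - τ₀) / (2 * N)) p
            = Polynomial.C p.leadingCoeff * ∏ j, (Polynomial.X - Polynomial.C (z j τ))) ∧
        (∀ τ ∈ V, ∀ j : Fin N, z j τ ≠ 0) ∧
        (∀ τ ∈ V, ∀ j k : Fin N, j ≠ k → z j τ ≠ z k τ) ∧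
        (∀ j : Fin N, ∀ τ ∈ V,
          HasDerivAt (z j)
            (z j τ * ((1 / (2 * (N : ℂ))) *
              (1 + ∑ k ∈ Finset.univ.erase j,
                (z j τ + z k τ) / (z j τ - z k τ)))) τ) := by
  obtain ⟨a, ha_inj, ha_mem⟩ := exists_injective_fin_roots hroots
    (by rw [IsAlgClosed.card_roots_eq_natDegree, natDegree_multHeatOp hdeg])
  have ha_root : ∀ j, (heatFlow N p τ₀ σ).IsRoot (a j) := fun j => isRoot_of_mem_roots (ha_mem j)
  have hlocal : ∀ j, ∃ w : ℂ → ℂ, w σ = a j ∧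
      ∀ᶠ τ in 𝓝 σ, DifferentiableAt ℂ w τ ∧ (heatFlow N p τ₀ τ).IsRoot (w τ) := fun j =>
    exists_eventually_differentiableAt_root (u := (σ, a j)) contDiff_eval_heatFlow.contDiffAt
      (ha_root j) ((heatFlow N p τ₀ σ).hasDerivAt (a j))
      (eval_derivative_heatFlow_ne_zero hdeg ha_inj ha_root j)
  choose w hwσ hw using hlocal
  have hcont : ∀ j, ContinuousAt (w j) σ := fun j => (hw j).self_of_nhds.1.continuousAt
  have hgood : ∀ᶠ τ in 𝓝 σ,
      (∀ j, DifferentiableAt ℂ (w j) τ ∧ (heatFlow N p τ₀ τ).IsRoot (w j τ)) ∧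
        (Function.Injective fun j => w j τ) ∧ ∀ j, w j τ ≠ 0 :=
    (eventually_all.2 hw).and <|
      (ContinuousAt.eventually_injective hcont (by simpa [hwσ] using ha_inj)).and <|
        eventually_all.2 fun j =>
          (hcont j).eventually_ne (hwσ j ▸ ne_of_mem_of_not_mem (ha_mem j) hroots0)
  obtain ⟨V, hV, hVo, hσV⟩ := eventually_nhds_iff.1 hgood
  refine ⟨V, hVo, hσV, w, fun j τ hτ => ((hV τ hτ).1 j).1.differentiableWithinAt, fun τ hτ => ?_,
    fun τ hτ => (hV τ hτ).2.2, fun τ hτ j k => (hV τ hτ).2.1.ne, fun j τ hτ => ?_⟩ <;>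
    obtain ⟨hwτ, hinj, -⟩ := hV τ hτ
  · exact heatFlow_eq_C_leadingCoeff_mul_prod hdeg hinj fun k => (hwτ k).2
  · exact hasDerivAt_of_isRoot_heatFlow hdeg hinj (fun k => (hwτ k).2) j (hwτ j).1
      (eventually_of_mem (hVo.mem_nhds hτ) fun s hs => ((hV s hs).1 j).2)

theorem stmt6 (N : ℕ) (hN : 0 < N) (p : Polynomial ℂ) (hdeg : p.natDegree = N)
    (τ₀ σ : ℂ)
    (hroots : ((multHeatOp N (-(σ - τ₀) / (2 * N)) p).roots).Nodup)
    (hroots0 : (0 : ℂ) ∉ (multHeatOp N (-(σ - τ₀) / (2 * N)) p).roots) :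
    ∃ V : Set ℂ, IsOpen V ∧ σ ∈ V ∧
      ∃ z : Fin N → ℂ → ℂ,
        (∀ j, DifferentiableOn ℂ (z j) V) ∧
        (∀ τ ∈ V,
          multHeatOp N (-(τ - τ₀) / (2 * N)) p
            = Polynomial.C p.leadingCoeff * ∏ j, (Polynomial.X - Polynomial.C (z j τ))) ∧
        (∀ τ ∈ V, ∀ j : Fin N, z j τ ≠ 0) ∧
        (∀ τ ∈ V, ∀ j k : Fin N, j ≠ k → z j τ ≠ z k τ) ∧
        (∀ j : Fin N, ∀ τ ∈ V,
          HasDerivAt (z j)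
            (z j τ * ((1 / (2 * (N : ℂ))) *
              (1 + ∑ k ∈ Finset.univ.erase j,
                (z j τ + z k τ) / (z j τ - z k τ)))) τ) :=
  stmt6_general N p hdeg τ₀ σ hroots hroots0
end

section
/- Let N be a positive integer, U ⊆ ℂ a connected open set, and z_1, …, z_N : U → ℂ holomorphic functions whose values are pairwise distinct for each τ ∈ U and which satisfy z_j'(τ) = −(1/N) ∑_{k ≠ j} 1/(z_j(τ) − z_k(τ)) for all j and all τ ∈ U. Define q_τ(z) = ∏_{j=1}^{N} (z − z_j(τ)). Then q satisfies the heat equation: for every τ ∈ U and every z ∈ ℂ, the complex derivative of the map τ ↦ q_τ(z) exists and equals (1/(2N)) ∂²q_τ/∂z² evaluated at z. -/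
/-!
By the product rule and the ODE, `∂_τ q_τ(w) = (1/N) ∑_j ∏_{m ≠ j} (w - z_m) ∑_{k ≠ j} 1/(z_j - z_k)`.
Symmetrizing in `(j, k)`, the terms for `(j, k)` and `(k, j)` add up to `∏_{m ≠ j, k} (w - z_m)`,
and the sum of these products over ordered pairs `j ≠ k` is exactly `q_τ''(w)`.
-/

open Finset

section ProdSub

variable {ι 𝕜 : Type*} [DecidableEq ι]

theorem Finset.sum_sum_erase_comm {M : Type*} [AddCommMonoid M] (s : Finset ι)
    (g : ι → ι → M) :
    ∑ j ∈ s, ∑ k ∈ s.erase j, g j k = ∑ j ∈ s, ∑ k ∈ s.erase j, g k j :=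
  Finset.sum_comm' fun j k => by simp only [mem_erase]; tauto

variable [NontriviallyNormedField 𝕜] (s : Finset ι) (a : ι → 𝕜)

theorem hasDerivAt_prod_sub (u : 𝕜) :
    HasDerivAt (fun v => ∏ j ∈ s, (v - a j)) (∑ j ∈ s, ∏ m ∈ s.erase j, (u - a m)) u := by
  simpa using HasDerivAt.fun_finsetProd (u := s) fun j _ => (hasDerivAt_id u).sub_const (a j)

theorem deriv_prod_sub :
    deriv (fun v => ∏ j ∈ s, (v - a j)) = fun u => ∑ j ∈ s, ∏ m ∈ s.erase j, (u - a m) :=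
  funext fun u => (hasDerivAt_prod_sub s a u).deriv

theorem deriv_deriv_prod_sub (u : 𝕜) :
    deriv (deriv fun v => ∏ j ∈ s, (v - a j)) u =
      ∑ j ∈ s, ∑ k ∈ s.erase j, ∏ m ∈ (s.erase j).erase k, (u - a m) := by
  rw [deriv_prod_sub]
  exact (HasDerivAt.fun_sum fun j _ => hasDerivAt_prod_sub (s.erase j) a u).deriv

end ProdSub

section PartialFractions

variable {ι K : Type*} [DecidableEq ι] [Field K] {s : Finset ι} {a : ι → K}

theorem prod_erase_div_sub_add_prod_erase_div_sub {j k : ι} (hj : j ∈ s) (hk : k ∈ s)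
    (hjk : j ≠ k) (ha : a j ≠ a k) (u : K) :
    (∏ m ∈ s.erase j, (u - a m)) / (a j - a k) + (∏ m ∈ s.erase k, (u - a m)) / (a k - a j) =
      ∏ m ∈ (s.erase j).erase k, (u - a m) := by
  rw [← mul_prod_erase (s.erase j) _ (mem_erase.2 ⟨hjk.symm, hk⟩), erase_right_comm,
    ← mul_prod_erase (s.erase k) _ (mem_erase.2 ⟨hjk, hj⟩), erase_right_comm]
  have hjk' : a j - a k ≠ 0 := sub_ne_zero.2 ha
  have hkj' : a k - a j ≠ 0 := sub_ne_zero.2 ha.symm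
  field_simp
  ring

theorem two_mul_sum_prod_erase_mul_sum_inv_sub (ha : Set.InjOn a s) (u : K) :
    2 * ∑ j ∈ s, (∏ m ∈ s.erase j, (u - a m)) * ∑ k ∈ s.erase j, 1 / (a j - a k) =
      ∑ j ∈ s, ∑ k ∈ s.erase j, ∏ m ∈ (s.erase j).erase k, (u - a m) := by
  rw [two_mul]
  simp_rw [mul_sum, mul_one_div]
  nth_rewrite 2 [sum_sum_erase_comm]
  rw [← sum_add_distrib]
  refine sum_congr rfl fun j hj => ?_
  rw [← sum_add_distrib]
  refine sum_congr rfl fun k hk => ?_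
  obtain ⟨hkj, hks⟩ := mem_erase.1 hk
  exact prod_erase_div_sub_add_prod_erase_div_sub hj hks hkj.symm
    (fun h => hkj (ha hks hj h.symm)) u

end PartialFractions

theorem stmt12_general (N : ℕ) (U : Set ℂ)
    (z : Fin N → ℂ → ℂ)
    (hdist : ∀ τ ∈ U, ∀ j k : Fin N, j ≠ k → z j τ ≠ z k τ)
    (hode : ∀ j : Fin N, ∀ τ ∈ U,
      HasDerivAt (z j)
        (-(1 / (N : ℂ)) * ∑ k ∈ Finset.univ.erase j, 1 / (z j τ - z k τ)) τ)
    (τ : ℂ) (hτ : τ ∈ U) (w : ℂ) :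
    HasDerivAt (fun σ => ∏ j, (w - z j σ))
      ((1 / (2 * (N : ℂ))) * deriv (deriv (fun u => ∏ j, (u - z j τ))) w) τ := by
  have hinj : Set.InjOn (z · τ) (univ : Finset (Fin N)) := fun j _ k _ h =>
    by_contra fun hjk => hdist τ hτ j k hjk h
  have hcoeff : 1 / (2 * (N : ℂ)) * 2 = 1 / N := by ring
  rw [deriv_deriv_prod_sub, ← two_mul_sum_prod_erase_mul_sum_inv_sub hinj w, ← mul_assoc,
    hcoeff, mul_sum]
  refine (HasDerivAt.fun_finsetProd fun j _ => (hode j τ hτ).const_sub w).congr_deriv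
    (sum_congr rfl fun j _ => ?_)
  simp only [smul_eq_mul]
  ring

theorem stmt12 (N : ℕ) (hN : 0 < N) (U : Set ℂ) (hU : IsOpen U)
    (hconn : IsConnected U)
    (z : Fin N → ℂ → ℂ)
    (hdist : ∀ τ ∈ U, ∀ j k : Fin N, j ≠ k → z j τ ≠ z k τ)
    (hode : ∀ j : Fin N, ∀ τ ∈ U,
      HasDerivAt (z j)
        (-(1 / (N : ℂ)) * ∑ k ∈ Finset.univ.erase j, 1 / (z j τ - z k τ)) τ)
    (τ : ℂ) (hτ : τ ∈ U) (w : ℂ) :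
    HasDerivAt (fun σ => ∏ j, (w - z j σ))
      ((1 / (2 * (N : ℂ))) * deriv (deriv (fun u => ∏ j, (u - z j τ))) w) τ :=
  stmt12_general N U z hdist hode τ hτ w
end

section
/- Let μ be the uniform probability measure on the closed unit disk {w ∈ ℂ : |w| ≤ 1}. Then for every z ∈ ℂ with |z| < 1, the function w ↦ 1/(z − w) is integrable with respect to μ and ∫_ℂ 1/(z − w) dμ(w) = z̄, the complex conjugate of z. -/
/-!
In polar coordinates the disk integral of `(z - w)⁻¹` is `2π ∫₀¹ r A(r) dr`, where `A(r)` is the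
average of `(z - w)⁻¹` over the circle `|w| = r`. For `r < |z|` the function is holomorphic on the
closed disk of radius `r`, so `A(r) = z⁻¹` by the mean value property. For `r > |z|`, rescaling to
the unit circle and inverting `u ↦ u⁻¹` (which preserves circle averages) turns it into
`u ↦ u / (z u - r)`, holomorphic on the closed unit disk and zero at `0`, so `A(r) = 0`.
Hence the integral is `2π · (|z|² / 2) · z⁻¹ = π z̄`.
-/

open MeasureTheory

/-- The uniform probability measure on the closed unit disk in `ℂ`:
`(1/π)` times the restriction of two-dimensional Lebesgue measure to the disk. -/
noncomputable def unifDisk : Measure ℂ :=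
  (ENNReal.ofReal Real.pi)⁻¹ • (volume.restrict {w : ℂ | ‖w‖ ≤ 1})

open Set Metric Real

theorem locallyIntegrable_inv_sub (z : ℂ) : LocallyIntegrable (fun w : ℂ ↦ (z - w)⁻¹) := by
  have hinv : LocallyIntegrable (fun w : ℂ ↦ w⁻¹) := by
    refine locallyIntegrable_of_norm_le_rpow (C := 1) (α := 1) (by simp) (by simp)
      (Filter.Eventually.of_forall fun w ↦ ?_) (by fun_prop)
    simp [Real.rpow_neg_one]
  rw [← Measure.map_sub_left_eq_self volume z] at hinv
  exact (locallyIntegrable_map_homeomorph (Homeomorph.subLeft z)).1 hinv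

section PolarCoord

variable {E : Type*} [NormedAddCommGroup E] [NormedSpace ℝ E]

theorem Complex.integrableOn_comp_polarCoord_symm_iff (f : ℂ → E) :
    IntegrableOn (fun p ↦ p.1 • f (Complex.polarCoord.symm p)) polarCoord.target ↔
      Integrable f := by
  rw [← (Complex.volume_preserving_equiv_real_prod.symm).integrable_comp_emb
      measurableEquivRealProd.symm.measurableEmbedding, ← integrableOn_univ,
    ← integrableOn_congr_set_ae polarCoord_source_ae_eq_univ,
    ← polarCoord.symm_image_target_eq_source,
    integrableOn_image_iff_integrableOn_abs_det_fderiv_smul volume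
      (measurableSet_Ioi.prod measurableSet_Ioo)
      (fun p _ ↦ (hasFDerivAt_polarCoord_symm p).hasFDerivWithinAt) (s := polarCoord.target)
      polarCoord.symm.injOn]
  refine integrableOn_congr_fun (fun p hp ↦ ?_) (measurableSet_Ioi.prod measurableSet_Ioo)
  simp only [det_fderivPolarCoordSymm, abs_of_pos (show 0 < p.1 from hp.1), Function.comp_apply,
    measurableEquivRealProd_symm_polarCoord_symm_apply]

theorem Complex.integral_Ioo_comp_polarCoord_symm_eq_circleAverage (f : ℂ → E) (r : ℝ) :
    ∫ θ in Ioo (-π) π, f (Complex.polarCoord.symm (r, θ)) = (2 * π) • circleAverage f 0 r := by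
  have hpolar (θ : ℝ) : Complex.polarCoord.symm (r, θ) = circleMap 0 r θ := by
    simp [circleMap_zero, Complex.exp_mul_I, mul_add]
  rw [circleAverage_eq_integral_add (-π), smul_inv_smul₀ (by positivity),
    intervalIntegral.integral_comp_add_right (fun θ ↦ f (circleMap 0 r θ)),
    Measure.restrict_congr_set Ioo_ae_eq_Ioc,
    ← intervalIntegral.integral_of_le (by linarith [pi_pos])]
  simp_rw [hpolar]
  congr 1 <;> ring

theorem integral_eq_two_pi_smul_integral_smul_circleAverage {f : ℂ → E} (hf : Integrable f) :
    ∫ w, f w = (2 * π) • ∫ r in Ioi 0, r • circleAverage f 0 r := by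
  have hint := (Complex.integrableOn_comp_polarCoord_symm_iff f).2 hf
  rw [IntegrableOn, polarCoord_target, Measure.volume_eq_prod, ← Measure.prod_restrict] at hint
  rw [← Complex.integral_comp_polarCoord_symm, polarCoord_target, Measure.volume_eq_prod,
    ← Measure.prod_restrict, integral_prod _ hint, ← integral_smul]
  refine integral_congr_ae (Filter.Eventually.of_forall fun r ↦ ?_)
  dsimp only
  rw [integral_smul, Complex.integral_Ioo_comp_polarCoord_symm_eq_circleAverage, smul_comm]

theorem setIntegral_closedBall_eq_two_pi_smul_integral_smul_circleAverage {f : ℂ → E} {R : ℝ}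
    (hf : IntegrableOn f (closedBall 0 R)) :
    ∫ w in closedBall 0 R, f w = (2 * π) • ∫ r in Ioc 0 R, r • circleAverage f 0 r := by
  rw [← integral_indicator measurableSet_closedBall,
    integral_eq_two_pi_smul_integral_smul_circleAverage
      (hf.integrable_indicator measurableSet_closedBall),
    ← Ioi_inter_Iic, ← setIntegral_indicator measurableSet_Iic]
  congr 1
  refine setIntegral_congr_fun measurableSet_Ioi fun r (hr : 0 < r) ↦ ?_
  by_cases hrR : r ≤ R
  · have hf_eq : EqOn ((closedBall 0 R).indicator f) f (sphere 0 |r|) := fun w hw ↦ by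
      rw [abs_of_pos hr] at hw
      exact indicator_of_mem (closedBall_subset_closedBall hrR (sphere_subset_closedBall hw)) f
    rw [indicator_of_mem (mem_Iic.2 hrR), circleAverage_congr_sphere hf_eq]
  · have hzero : EqOn ((closedBall 0 R).indicator f) 0 (sphere 0 |r|) := fun w hw ↦ by
      rw [abs_of_pos hr] at hw
      exact indicator_of_notMem (by simp_all) f
    rw [indicator_of_notMem (mt mem_Iic.1 hrR), circleAverage_congr_sphere hzero]
    simp [circleAverage_def]

end PolarCoord

theorem circleAverage_inv_sub_of_abs_lt {z : ℂ} {r : ℝ} (hr : |r| < ‖z‖) :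
    circleAverage (fun w ↦ (z - w)⁻¹) 0 r = z⁻¹ := by
  have hdiff : DifferentiableOn ℂ (fun w ↦ (z - w)⁻¹) (closure (ball 0 |r|)) := by
    refine DifferentiableOn.inv (by fun_prop) fun w hw ↦ sub_ne_zero.2 fun hzw ↦ ?_
    have := closure_ball_subset_closedBall hw
    rw [← hzw, mem_closedBall_zero_iff] at this
    linarith
  simpa using hdiff.diffContOnCl.circleAverage

theorem circleAverage_inv_sub_of_lt_abs {z : ℂ} {r : ℝ} (hr : ‖z‖ < |r|) :
    circleAverage (fun w ↦ (z - w)⁻¹) 0 r = 0 := by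
  have hinv : EqOn (fun u ↦ (z - (r * u⁻¹ + 0))⁻¹) (fun u ↦ u * (z * u - r)⁻¹) (sphere 0 |1|) := by
    intro u hu
    have hu0 : u ≠ 0 := by rintro rfl; simp at hu
    simp only [add_zero, ← div_eq_mul_inv]
    rw [sub_div' hu0, inv_div, div_eq_mul_inv]
  have hdiff : DifferentiableOn ℂ (fun u ↦ u * (z * u - r)⁻¹) (closure (ball 0 |1|)) := by
    refine DifferentiableOn.mul (by fun_prop) (DifferentiableOn.inv (by fun_prop) fun u hu ↦ ?_)
    have hu1 : ‖u‖ ≤ 1 := by simpa using closure_ball_subset_closedBall hu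
    have hzu : ‖z * u‖ < ‖(r : ℂ)‖ := by
      rw [norm_mul, Complex.norm_real, Real.norm_eq_abs]
      nlinarith [norm_nonneg z, norm_nonneg u]
    exact sub_ne_zero.2 fun h ↦ hzu.ne (congrArg norm h)
  rw [circleAverage_eq_circleAverage_zero_one, ← circleAverage_zero_one_congr_inv,
    circleAverage_congr_sphere hinv, hdiff.diffContOnCl.circleAverage, zero_mul]

theorem setIntegral_closedBall_inv_sub {z : ℂ} (hz : ‖z‖ < 1) :
    ∫ w in closedBall 0 1, (z - w)⁻¹ = π * (starRingEnd ℂ) z := by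
  have hae : (fun r : ℝ ↦ r • circleAverage (fun w ↦ (z - w)⁻¹) 0 r)
      =ᵐ[volume.restrict (Ioc 0 1)] (Iic ‖z‖).indicator (fun r ↦ r • z⁻¹) := by
    filter_upwards [ae_restrict_mem measurableSet_Ioc, Measure.ae_ne _ ‖z‖] with r hr hrz
    rcases hrz.lt_or_gt with hlt | hgt
    · rw [indicator_of_mem (mem_Iic.2 hlt.le),
        circleAverage_inv_sub_of_abs_lt (by rwa [abs_of_pos hr.1])]
    · rw [indicator_of_notMem (notMem_Iic.2 hgt),
        circleAverage_inv_sub_of_lt_abs (by rwa [abs_of_pos hr.1]), smul_zero]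
  rw [setIntegral_closedBall_eq_two_pi_smul_integral_smul_circleAverage
      ((locallyIntegrable_inv_sub z).integrableOn_isCompact (isCompact_closedBall 0 1)),
    integral_congr_ae hae, setIntegral_indicator measurableSet_Iic, Ioc_inter_Iic,
    inf_eq_right.2 hz.le, integral_smul_const, ← intervalIntegral.integral_of_le (norm_nonneg z),
    integral_id, Complex.inv_def, ← Complex.normSq_eq_norm_sq]
  rcases eq_or_ne z 0 with rfl | hz0
  · simp
  · have hnormSq : (Complex.normSq z : ℂ) ≠ 0 := by exact_mod_cast (Complex.normSq_pos.2 hz0).ne'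
    simp only [Complex.real_smul]
    push_cast
    field_simp
    ring

theorem stmt16 (z : ℂ) (hz : ‖z‖ < 1) :
    Integrable (fun w : ℂ => 1 / (z - w)) unifDisk ∧
    ∫ w, 1 / (z - w) ∂unifDisk = (starRingEnd ℂ) z := by
  have hdisk : {w : ℂ | ‖w‖ ≤ 1} = closedBall 0 1 := by
    ext
    simp
  simp_rw [unifDisk, hdisk, one_div]
  refine ⟨((locallyIntegrable_inv_sub z).integrableOn_isCompact
    (isCompact_closedBall 0 1)).smul_measure (by simp [pi_pos]), ?_⟩
  rw [integral_smul_measure, setIntegral_closedBall_inv_sub hz, ENNReal.toReal_inv,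
    ENNReal.toReal_ofReal pi_pos.le, Complex.real_smul]
  push_cast
  field_simp
end

section
/- Let N be a positive integer, T > 0, and let z_1, …, z_N : [0, T) → ℂ be differentiable functions whose values are nonzero and pairwise distinct for each t ∈ [0, T) and which satisfy (1/z_j(t)) z_j'(t) = (1/(2N)) [ 1 + ∑_{k ≠ j} (z_j(t) + z_k(t)) / (z_j(t) − z_k(t)) ] for all j and all t ∈ [0, T). If |z_j(0)| = 1 for every j, then |z_j(t)| = e^{t/(2N)} for every j and every t ∈ [0, T); in particular, the rescaled points e^{−t/(2N)} z_j(t) remain on the unit circle for as long as the points stay distinct. -/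
/-!
Since `Re ((z + w) / (z - w)) = (|z|² - |w|²) / |z - w|²`, the flow gives
`d/dt |z_j|² = (|z_j|² / N) (1 + ∑_{k ≠ j} (|z_j|² - |z_k|²) / |z_j - z_k|²)`. Hence the defects
`u_j = e^{-t/N} |z_j|² - 1` satisfy the linear system `u_j' = ∑_{k ≠ j} a_{jk}(t) (u_j - u_k)` with
coefficients `a_{jk} = |z_j|² / (N |z_j - z_k|²)`, continuous as long as the points stay distinct.
They vanish at `t = 0`, so Grönwall's inequality forces `u ≡ 0`, i.e. `|z_j(t)|² = e^{t/N}`.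
-/

open Finset Set

theorem Complex.re_add_div_sub (z w : ℂ) :
    ((z + w) / (z - w)).re = (‖z‖ ^ 2 - ‖w‖ ^ 2) / ‖z - w‖ ^ 2 := by
  simp only [Complex.div_re, ← Complex.normSq_eq_norm_sq, Complex.normSq_apply, Complex.add_re,
    Complex.sub_re, Complex.add_im, Complex.sub_im]
  ring

theorem HasDerivWithinAt.norm_sq_of_eq_mul {z : ℝ → ℂ} {c : ℂ} {s : Set ℝ} {t : ℝ}
    (hz : HasDerivWithinAt z (z t * c) s t) :
    HasDerivWithinAt (‖z ·‖ ^ 2) (2 * c.re * ‖z t‖ ^ 2) s t := by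
  refine hz.norm_sq.congr_deriv ?_
  rw [Complex.inner, mul_right_comm (z t), Complex.mul_conj, Complex.normSq_eq_norm_sq,
    Complex.re_ofReal_mul]
  ring

theorem norm_sum_mul_sub_le {ι : Type*} [Fintype ι] (s : Finset ι) (a u : ι → ℝ) (j : ι) :
    ‖∑ k ∈ s, a k * (u j - u k)‖ ≤ (2 * ∑ k ∈ s, |a k|) * ‖u‖ := by
  calc ‖∑ k ∈ s, a k * (u j - u k)‖
      ≤ ∑ k ∈ s, |a k| * ‖u j - u k‖ :=
        (norm_sum_le s _).trans_eq (by simp only [norm_mul, Real.norm_eq_abs])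
    _ ≤ ∑ k ∈ s, |a k| * (2 * ‖u‖) := by
        gcongr with k
        calc ‖u j - u k‖ ≤ ‖u j‖ + ‖u k‖ := norm_sub_le _ _
          _ ≤ ‖u‖ + ‖u‖ := add_le_add (norm_le_pi_norm u j) (norm_le_pi_norm u k)
          _ = 2 * ‖u‖ := by ring
    _ = (2 * ∑ k ∈ s, |a k|) * ‖u‖ := by rw [← Finset.sum_mul]; ring

theorem eq_zero_of_hasDerivWithinAt_sum_mul_sub {ι : Type*} [Fintype ι] (s : ι → Finset ι)
    {a : ι → ι → ℝ → ℝ} {u : ℝ → ι → ℝ} {p q : ℝ}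
    (ha : ∀ j, ∀ k ∈ s j, ContinuousOn (a j k) (Icc p q))
    (hu : ∀ j, ∀ t ∈ Icc p q,
      HasDerivWithinAt (u · j) (∑ k ∈ s j, a j k t * (u t j - u t k)) (Icc p q) t)
    (hp : u p = 0) :
    ∀ t ∈ Icc p q, u t = 0 := by
  have hu' : ∀ t ∈ Icc p q, HasDerivWithinAt u
      (fun j => ∑ k ∈ s j, a j k t * (u t j - u t k)) (Icc p q) t :=
    fun t ht => hasDerivWithinAt_pi.2 fun j => hu j t ht
  obtain ⟨K, hK⟩ : ∃ K, ∀ t ∈ Icc p q, ‖∑ j, ∑ k ∈ s j, |a j k t|‖ ≤ K :=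
    isCompact_Icc.exists_bound_of_continuousOn <|
      continuousOn_finsetSum _ fun j _ => continuousOn_finsetSum _ fun k hk => (ha j k hk).abs
  refine eq_zero_of_abs_deriv_le_mul_abs_self_of_eq_zero_right (K := 2 * K)
    (fun t ht => (hu' t ht).continuousWithinAt)
    (fun t ht => (hu' t (Ico_subset_Icc_self ht)).mono_of_mem_nhdsWithin <|
      Filter.mem_of_superset (Icc_mem_nhdsGE ht.2) (Icc_subset_Icc_left ht.1))
    hp fun t ht => ?_
  have hsum : ∀ j, ∑ k ∈ s j, |a j k t| ≤ K := fun j =>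
    calc ∑ k ∈ s j, |a j k t| ≤ ∑ j, ∑ k ∈ s j, |a j k t| :=
          single_le_sum (f := fun j => ∑ k ∈ s j, |a j k t|)
            (fun j _ => sum_nonneg fun k _ => abs_nonneg _) (mem_univ j)
      _ ≤ K := (le_abs_self _).trans (hK t (Ico_subset_Icc_self ht))
  have hK0 : 0 ≤ K := (norm_nonneg _).trans (hK t (Ico_subset_Icc_self ht))
  refine (pi_norm_le_iff_of_nonneg (by positivity)).2 fun j => ?_
  calc ‖∑ k ∈ s j, a j k t * (u t j - u t k)‖
      ≤ (2 * ∑ k ∈ s j, |a j k t|) * ‖u t‖ := norm_sum_mul_sub_le (s j) (a j · t) (u t) j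
    _ ≤ 2 * K * ‖u t‖ := by gcongr; exact hsum j

theorem hasDerivWithinAt_exp_mul_norm_sq_sub_one {N : ℕ} {z : Fin N → ℝ → ℂ} {s : Set ℝ} {t : ℝ}
    {j : Fin N}
    (hz : HasDerivWithinAt (z j) (z j t * ((1 / (2 * (N : ℂ))) *
      (1 + ∑ k ∈ univ.erase j, (z j t + z k t) / (z j t - z k t)))) s t) :
    HasDerivWithinAt (fun τ => Real.exp (-(τ / N)) * ‖z j τ‖ ^ 2 - 1)
      (∑ k ∈ univ.erase j, ‖z j t‖ ^ 2 / ‖z j t - z k t‖ ^ 2 / N *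
        ((Real.exp (-(t / N)) * ‖z j t‖ ^ 2 - 1) - (Real.exp (-(t / N)) * ‖z k t‖ ^ 2 - 1)))
      s t := by
  have hexp : HasDerivWithinAt (fun τ => Real.exp (-(τ / N)))
      (Real.exp (-(t / N)) * -(1 / N)) s t :=
    ((hasDerivAt_id t).div_const _).neg.exp.hasDerivWithinAt
  have hre :
      ((1 / (2 * (N : ℂ))) * (1 + ∑ k ∈ univ.erase j, (z j t + z k t) / (z j t - z k t))).re =
        1 / (2 * N) *
          (1 + ∑ k ∈ univ.erase j, (‖z j t‖ ^ 2 - ‖z k t‖ ^ 2) / ‖z j t - z k t‖ ^ 2) := by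
    simp [Complex.re_sum, Complex.re_add_div_sub]
  refine ((hexp.fun_mul hz.norm_sq_of_eq_mul).sub_const 1).congr_deriv ?_
  rw [hre]
  calc _ = Real.exp (-(t / N)) * ‖z j t‖ ^ 2 / N *
        ∑ k ∈ univ.erase j, (‖z j t‖ ^ 2 - ‖z k t‖ ^ 2) / ‖z j t - z k t‖ ^ 2 := by ring
    _ = _ := by rw [mul_sum]; exact sum_congr rfl fun k _ => by ring

theorem stmt19_general (N : ℕ) (T : ℝ)
    (z : Fin N → ℝ → ℂ)
    (hdist : ∀ t ∈ Set.Ico (0 : ℝ) T, ∀ j k : Fin N, j ≠ k → z j t ≠ z k t)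
    (hode : ∀ j : Fin N, ∀ t ∈ Set.Ico (0 : ℝ) T,
      HasDerivWithinAt (z j)
        (z j t * ((1 / (2 * (N : ℂ))) *
          (1 + ∑ k ∈ Finset.univ.erase j, (z j t + z k t) / (z j t - z k t))))
        (Set.Ico (0 : ℝ) T) t)
    (hinit : ∀ j : Fin N, ‖z j 0‖ = 1) :
    ∀ j : Fin N, ∀ t ∈ Set.Ico (0 : ℝ) T,
      ‖z j t‖ = Real.exp (t / (2 * N)) := by
  intro j t ht
  have hsub : Icc 0 t ⊆ Ico 0 T := Icc_subset_Ico_right ht.2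
  have hz : ∀ j, ContinuousOn (z j) (Icc 0 t) := fun j τ hτ =>
    (hode j τ (hsub hτ)).continuousWithinAt.mono hsub
  have hdefect := eq_zero_of_hasDerivWithinAt_sum_mul_sub (fun j => univ.erase j)
    (a := fun j k τ => ‖z j τ‖ ^ 2 / ‖z j τ - z k τ‖ ^ 2 / N)
    (u := fun τ j => Real.exp (-(τ / N)) * ‖z j τ‖ ^ 2 - 1)
    (fun j k hk => (((hz j).norm.pow 2).div (((hz j).sub (hz k)).norm.pow 2) fun τ hτ =>
      pow_ne_zero 2 <| norm_ne_zero_iff.2 <| sub_ne_zero.2 <|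
        hdist τ (hsub hτ) j k (ne_of_mem_erase hk).symm).div_const _)
    (fun j τ hτ => hasDerivWithinAt_exp_mul_norm_sq_sub_one ((hode j τ (hsub hτ)).mono hsub))
    (funext fun j => by simp [hinit]) t ⟨ht.1, le_rfl⟩
  have hsq : ‖z j t‖ ^ 2 = Real.exp (t / (2 * N)) ^ 2 := by
    have h := sub_eq_zero.1 (congrFun hdefect j)
    rw [Real.exp_neg, inv_mul_eq_one₀ (Real.exp_pos _).ne'] at h
    rw [← h, sq, ← Real.exp_add]
    congr 1
    ring
  exact (pow_left_inj₀ (norm_nonneg _) (Real.exp_pos _).le two_ne_zero).1 hsq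

theorem stmt19 (N : ℕ) (hN : 0 < N) (T : ℝ) (hT : 0 < T)
    (z : Fin N → ℝ → ℂ)
    (hne : ∀ t ∈ Set.Ico (0 : ℝ) T, ∀ j : Fin N, z j t ≠ 0)
    (hdist : ∀ t ∈ Set.Ico (0 : ℝ) T, ∀ j k : Fin N, j ≠ k → z j t ≠ z k t)
    (hode : ∀ j : Fin N, ∀ t ∈ Set.Ico (0 : ℝ) T,
      HasDerivWithinAt (z j)
        (z j t * ((1 / (2 * (N : ℂ))) *
          (1 + ∑ k ∈ Finset.univ.erase j, (z j t + z k t) / (z j t - z k t))))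
        (Set.Ico (0 : ℝ) T) t)
    (hinit : ∀ j : Fin N, ‖z j 0‖ = 1) :
    ∀ j : Fin N, ∀ t ∈ Set.Ico (0 : ℝ) T,
      ‖z j t‖ = Real.exp (t / (2 * N)) :=
  stmt19_general N T z hdist hode hinit
end
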